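/- arXiv:1911.03421 — 6 statements merged into one kernel-verified Lean document; each statement's English description precedes it below -/
import Mathlib

section
/- Let n ≥ 1 and let A ⊆ [0,1]^n be an antichain with respect to the coordinatewise partial order. Then A has n-dimensional Lebesgue measure zero. -/
open MeasureTheory

theorem statement0_general (n : ℕ) (hn : 1 ≤ n) (A : Set (EuclideanSpace ℝ (Fin n)))
    (hanti : ∀ x ∈ A, ∀ y ∈ A, (∀ i, x i ≤ y i) → x = y) :
    volume A = 0 := by
  have : Nonempty (Fin n) := ⟨⟨0, hn⟩⟩
  let e := MeasurableEquiv.toLp 2 (Fin n → ℝ)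
  have hanti' : IsAntichain (· ≤ ·) (e ⁻¹' A) := fun x hx y hy hne hle ↦
    hne (WithLp.toLp_injective 2 (hanti _ hx _ hy hle))
  rw [← (PiLp.volume_preserving_toLp (Fin n)).measure_preimage_equiv (f := e) A]
  exact hanti'.volume_eq_zero

/-- Any antichain in `[0,1]^n` (coordinatewise order) has
`n`-dimensional Lebesgue measure zero. -/
theorem statement0 (n : ℕ) (hn : 1 ≤ n) (A : Set (EuclideanSpace ℝ (Fin n)))
    (hA : A ⊆ {x : EuclideanSpace ℝ (Fin n) | ∀ i, x i ∈ Set.Icc (0 : ℝ) 1})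
    (hanti : ∀ x ∈ A, ∀ y ∈ A, (∀ i, x i ≤ y i) → x = y) :
    volume A = 0 :=
  statement0_general n hn A hanti
end

section
/- Let n ≥ 1 and let A ⊆ [0,1]^n be an antichain with respect to the coordinatewise partial order. Then the Hausdorff dimension of A is at most n − 1. -/
/-!
Subtracting the last coordinate from the others projects `ℝ^(m+1)` onto `ℝ^m` along the
diagonal `(1, …, 1)`. For two points `x, y` of an antichain, `x - y` has a coordinate `≤ 0` and
one `≥ 0`; this traps its last coordinate, and hence every coordinate, within twice the size of
the projection of `x - y`. So the projection is injective with Lipschitz inverse on the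
antichain, and `dimH A ≤ dimH ℝ^m = m`.
-/

open MeasureTheory Set

theorem EuclideanSpace.dist_le_sqrt_card_mul {ι : Type*} [Fintype ι]
    {x y : EuclideanSpace ℝ ι} {B : ℝ} (hB : 0 ≤ B) (h : ∀ i, |x i - y i| ≤ B) :
    dist x y ≤ √(Fintype.card ι) * B := by
  rw [EuclideanSpace.dist_eq, ← Real.sqrt_sq hB, ← Real.sqrt_mul (Nat.cast_nonneg _)]
  gcongr
  calc ∑ i, dist (x i) (y i) ^ 2 ≤ ∑ _i : ι, B ^ 2 := by
        gcongr with i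
        rw [Real.dist_eq]
        exact h i
    _ = _ := by simp

lemma abs_le_two_mul_of_forall_abs_sub_le {ι : Type*} {d : ι → ℝ} {c D : ℝ}
    (hD : ∀ k, |d k - c| ≤ D) {i j : ι} (hi : d i ≤ 0) (hj : 0 ≤ d j) (k : ι) :
    |d k| ≤ 2 * D := by
  have hci := abs_le.mp (hD i)
  have hcj := abs_le.mp (hD j)
  have hck := abs_le.mp (hD k)
  rw [abs_le]
  constructor <;> linarith

theorem le_dimH_image_of_antilipschitzWith_domRestrict {X Y : Type*} [EMetricSpace X]
    [EMetricSpace Y] {K : NNReal} {f : X → Y} {s : Set X}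
    (hf : AntilipschitzWith K (s.domRestrict f)) : dimH s ≤ dimH (f '' s) := by
  have dimH_univ_eq : dimH (univ : Set s) = dimH s := by
    simpa using ((isometry_subtype_coe (s := s)).dimH_image univ).symm
  simpa [dimH_univ_eq, range_domRestrict] using hf.le_dimH_image univ

def subLast {m : ℕ} (x : EuclideanSpace ℝ (Fin (m + 1))) : EuclideanSpace ℝ (Fin m) :=
  WithLp.toLp 2 fun i => x i.castSucc - x (Fin.last m)

section
variable {m : ℕ}

lemma abs_sub_sub_le_dist_subLast (x y : EuclideanSpace ℝ (Fin (m + 1))) (k : Fin (m + 1)) :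
    |(x k - y k) - (x (Fin.last m) - y (Fin.last m))| ≤ dist (subLast x) (subLast y) := by
  induction k using Fin.lastCases with
  | last => simp
  | cast i =>
    have := PiLp.dist_apply_le (subLast x) (subLast y) i
    rwa [Real.dist_eq, subLast, subLast, PiLp.toLp_apply, PiLp.toLp_apply,
      sub_sub_sub_comm] at this

lemma dist_le_of_exists_le_of_exists_le {x y : EuclideanSpace ℝ (Fin (m + 1))}
    (hxy : ∃ i, x i ≤ y i) (hyx : ∃ j, y j ≤ x j) :
    dist x y ≤ 2 * √(m + 1) * dist (subLast x) (subLast y) := by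
  obtain ⟨i, hi⟩ := hxy
  obtain ⟨j, hj⟩ := hyx
  have hcoord : ∀ k, |x k - y k| ≤ 2 * dist (subLast x) (subLast y) :=
    abs_le_two_mul_of_forall_abs_sub_le (d := fun k => x k - y k)
      (abs_sub_sub_le_dist_subLast x y) (i := i) (j := j) (by linarith) (by linarith)
  calc dist x y ≤ √(Fintype.card (Fin (m + 1))) * (2 * dist (subLast x) (subLast y)) :=
        EuclideanSpace.dist_le_sqrt_card_mul (by positivity) hcoord
    _ = 2 * √(m + 1) * dist (subLast x) (subLast y) := by rw [Fintype.card_fin]; push_cast; ring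

lemma antilipschitzWith_domRestrict_subLast {A : Set (EuclideanSpace ℝ (Fin (m + 1)))}
    (hA : ∀ x ∈ A, ∀ y ∈ A, (∀ i, x i ≤ y i) → x = y) :
    AntilipschitzWith (2 * NNReal.sqrt (m + 1)) (A.domRestrict subLast) := by
  have exists_le : ∀ x ∈ A, ∀ y ∈ A, ∃ i, x i ≤ y i := by
    intro x hx y hy
    by_contra! hlt
    have := hA y hy x hx fun i => (hlt i).le
    exact (hlt 0).ne (by rw [this])
  refine AntilipschitzWith.of_le_mul_dist fun x y => ?_
  simpa [Subtype.dist_eq] using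
    dist_le_of_exists_le_of_exists_le (exists_le x x.2 y y.2) (exists_le y y.2 x x.2)

end

theorem statement1_general (n : ℕ) (A : Set (EuclideanSpace ℝ (Fin n)))
    (hanti : ∀ x ∈ A, ∀ y ∈ A, (∀ i, x i ≤ y i) → x = y) :
    dimH A ≤ (n : ENNReal) - 1 := by
  cases n with
  | zero => simp [dimH_subsingleton A.subsingleton_of_subsingleton]
  | succ m =>
    calc dimH A ≤ dimH (subLast '' A) :=
          le_dimH_image_of_antilipschitzWith_domRestrict
            (antilipschitzWith_domRestrict_subLast hanti)
      _ ≤ dimH (univ : Set (EuclideanSpace ℝ (Fin m))) := dimH_mono (subset_univ _)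
      _ = m := by rw [Real.dimH_univ_eq_finrank, finrank_euclideanSpace_fin]
      _ = ((m + 1 : ℕ) : ENNReal) - 1 := by
          push_cast
          rw [ENNReal.add_sub_cancel_right ENNReal.one_ne_top]

/-- Any antichain in `[0,1]^n` (coordinatewise order) has
Hausdorff dimension at most `n - 1`. -/
theorem statement1 (n : ℕ) (hn : 1 ≤ n) (A : Set (EuclideanSpace ℝ (Fin n)))
    (hA : A ⊆ {x : EuclideanSpace ℝ (Fin n) | ∀ i, x i ∈ Set.Icc (0 : ℝ) 1})
    (hanti : ∀ x ∈ A, ∀ y ∈ A, (∀ i, x i ≤ y i) → x = y) :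
    dimH A ≤ (n : ENNReal) - 1 :=
  statement1_general n A hanti
end

section
/- Let n ≥ 3 and define p : (0,1)^{n−1} → ℝ by p(x_1,…,x_{n−1}) = (∏_{i=1}^{n−2} x_{σ(i)}) / (1 − x_{σ(n−1)} + ∏_{i=1}^{n−2} x_{σ(i)}), where σ is any permutation of {1,…,n−1} with x_{σ(1)} ≤ ⋯ ≤ x_{σ(n−1)}. Then p is well-defined (the value does not depend on the choice of σ), p maps (0,1)^{n−1} into (0,1), and for each index i and each choice of fixed values of the other n−2 coordinates in (0,1), the resulting one-variable function (0,1) → (0,1) is strictly increasing and surjective. In particular, if x, y ∈ (0,1)^{n−1} satisfy x ≤ y coordinatewise and x ≠ y, then p(x) < p(y). -/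
noncomputable def pVal {k : ℕ} (σ : Equiv.Perm (Fin (k + 1))) (x : Fin (k + 1) → ℝ) : ℝ :=
  (∏ i ∈ Finset.univ.erase (Fin.last k), x (σ i)) /
    (1 - x (σ (Fin.last k)) + ∏ i ∈ Finset.univ.erase (Fin.last k), x (σ i))

noncomputable def pFun {k : ℕ} (x : Fin (k + 1) → ℝ) : ℝ := pVal (Tuple.sort x) x

/-!
Write `M` for the largest coordinate of `x` and `Q = (∏ xᵢ) / M` for the product of the others.
For every sorting permutation the formula reads `p = Q / (1 - M + Q)`, which does not involve the
permutation. Both `M` and `Q` are monotone in `x`, and since `M * Q = ∏ xᵢ` grows strictly when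
`x < y`, one of them grows strictly; as `Q / (1 - M + Q)` increases in `M` and in `Q`, `p` is
strictly monotone. Along a coordinate line `t ↦ x[j := t]` the remaining coordinates keep `M`
positive, so `p` is continuous on `[0, 1]`, with value `0` at `t = 0` (where `Q = 0`) and `1` at
`t = 1` (where `M = 1`); the intermediate value theorem gives surjectivity onto `(0, 1)`.
-/

open Finset Function Set

lemma div_add_lt_div_add {a a' b b' : ℝ} (ha' : 0 < a') (hb : 0 < b) (ha'a : a' ≤ a)
    (hbb' : b ≤ b') (hlt : a' < a ∨ b < b') : b / (a + b) < b' / (a' + b') := by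
  rw [div_lt_div_iff₀ (by linarith) (by linarith)]
  rcases hlt with h | h <;> nlinarith [mul_le_mul_of_nonneg_left hbb' ha'.le]

namespace CoordMax

variable {ι : Type*} [Fintype ι] [Nonempty ι]

noncomputable def maxCoord (x : ι → ℝ) : ℝ := univ.sup' univ_nonempty x

noncomputable def prodExceptMax (x : ι → ℝ) : ℝ := (∏ i, x i) / maxCoord x

noncomputable def pSymm (x : ι → ℝ) : ℝ :=
  prodExceptMax x / (1 - maxCoord x + prodExceptMax x)

lemma le_maxCoord (x : ι → ℝ) (i : ι) : x i ≤ maxCoord x :=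
  le_sup' x (mem_univ i)

lemma exists_maxCoord_eq (x : ι → ℝ) : ∃ i, maxCoord x = x i := by
  obtain ⟨i, -, hi⟩ := exists_mem_eq_sup' univ_nonempty x
  exact ⟨i, hi⟩

lemma maxCoord_mono : Monotone (maxCoord : (ι → ℝ) → ℝ) := fun _ _ hxy =>
  sup'_mono_fun fun i _ => hxy i

lemma maxCoord_pos {x : ι → ℝ} (hx : ∀ i, 0 < x i) : 0 < maxCoord x := by
  obtain ⟨i, hi⟩ := exists_maxCoord_eq x
  exact hi ▸ hx i

lemma maxCoord_lt_one {x : ι → ℝ} (hx : ∀ i, x i < 1) : maxCoord x < 1 := by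
  obtain ⟨i, hi⟩ := exists_maxCoord_eq x
  exact hi ▸ hx i

lemma continuous_maxCoord : Continuous (maxCoord : (ι → ℝ) → ℝ) :=
  Continuous.finset_sup'_apply _ fun i _ => continuous_apply i

lemma prodExceptMax_pos {x : ι → ℝ} (hx : ∀ i, 0 < x i) : 0 < prodExceptMax x :=
  div_pos (prod_pos fun i _ => hx i) (maxCoord_pos hx)

lemma prodExceptMax_le_prod_erase [DecidableEq ι] {x : ι → ℝ} (hx : ∀ i, 0 < x i) (j : ι) :
    prodExceptMax x ≤ ∏ i ∈ univ.erase j, x i := by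
  rw [prodExceptMax, ← mul_prod_erase univ x (mem_univ j), mul_div_right_comm]
  exact mul_le_of_le_one_left (prod_pos fun i _ => hx i).le
    ((div_le_one (maxCoord_pos hx)).2 (le_maxCoord x j))

lemma prodExceptMax_eq_prod_erase [DecidableEq ι] {x : ι → ℝ} {j : ι}
    (hj : maxCoord x = x j) (hj₀ : x j ≠ 0) :
    prodExceptMax x = ∏ i ∈ univ.erase j, x i := by
  rw [prodExceptMax, ← mul_prod_erase univ x (mem_univ j), hj, mul_div_cancel_left₀ _ hj₀]

lemma prodExceptMax_le_prodExceptMax {x y : ι → ℝ} (hx : ∀ i, 0 < x i) (hxy : x ≤ y) :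
    prodExceptMax x ≤ prodExceptMax y := by
  classical
  obtain ⟨j, hj⟩ := exists_maxCoord_eq y
  calc prodExceptMax x ≤ ∏ i ∈ univ.erase j, x i := prodExceptMax_le_prod_erase hx j
    _ ≤ ∏ i ∈ univ.erase j, y i := prod_le_prod (fun i _ => (hx i).le) fun i _ => hxy i
    _ = prodExceptMax y :=
      (prodExceptMax_eq_prod_erase hj ((hx j).trans_le (hxy j)).ne').symm

lemma maxCoord_lt_or_prodExceptMax_lt {x y : ι → ℝ} (hx : ∀ i, 0 < x i) (hxy : x < y) :
    maxCoord x < maxCoord y ∨ prodExceptMax x < prodExceptMax y := by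
  refine (maxCoord_mono hxy.le).lt_or_eq.imp_right fun hM => ?_
  have hy : ∀ i, 0 < y i := fun i => (hx i).trans_le (hxy.le i)
  obtain ⟨j, hj⟩ := Pi.lt_def.1 hxy |>.2
  have hprod : ∏ i, x i < ∏ i, y i :=
    prod_lt_prod (fun i _ => hx i) (fun i _ => hxy.le i) ⟨j, mem_univ j, hj⟩
  rw [prodExceptMax, prodExceptMax, hM]
  exact div_lt_div_of_pos_right hprod (maxCoord_pos hy)

lemma pSymm_mem_Ioo {x : ι → ℝ} (hx : x ∈ univ.pi fun _ => Ioo (0 : ℝ) 1) :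
    pSymm x ∈ Ioo (0 : ℝ) 1 := by
  simp only [mem_univ_pi, Set.mem_Ioo] at hx
  have hQ := prodExceptMax_pos fun i => (hx i).1
  have hM := maxCoord_lt_one fun i => (hx i).2
  exact ⟨div_pos hQ (by linarith), (div_lt_one (by linarith)).2 (by linarith)⟩

lemma pSymm_strictMonoOn :
    StrictMonoOn (pSymm : (ι → ℝ) → ℝ) (univ.pi fun _ => Ioo 0 1) := by
  intro x hx y hy hxy
  simp only [mem_univ_pi, Set.mem_Ioo] at hx hy
  exact div_add_lt_div_add (by linarith [maxCoord_lt_one fun i => (hy i).2])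
    (prodExceptMax_pos fun i => (hx i).1) (by linarith [maxCoord_mono hxy.le])
    (prodExceptMax_le_prodExceptMax (fun i => (hx i).1) hxy.le)
    ((maxCoord_lt_or_prodExceptMax_lt (fun i => (hx i).1) hxy).imp_left fun h => by linarith)

lemma surjOn_pSymm_update [Nontrivial ι] [DecidableEq ι] {x : ι → ℝ}
    (hx : x ∈ univ.pi fun _ => Ioo (0 : ℝ) 1) (j : ι) :
    SurjOn (fun t => pSymm (update x j t)) (Ioo 0 1) (Ioo 0 1) := by
  simp only [mem_univ_pi, Set.mem_Ioo] at hx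
  obtain ⟨i, hij⟩ := exists_ne j
  have hcoord (p : ℝ → Prop) {t : ℝ} (ht : p t) (hp : ∀ l, p (x l)) (l : ι) :
      p (update x j t l) :=
    (forall_update_iff x fun _ v => p v).2 ⟨ht, fun l _ => hp l⟩ l
  have hM_pos (t : ℝ) : 0 < maxCoord (update x j t) :=
    (hx i).1.trans_le (update_of_ne hij t x ▸ le_maxCoord _ i)
  have hM_one : maxCoord (update x j 1) = 1 :=
    le_antisymm (sup'_le _ _ fun l _ => hcoord (· ≤ 1) le_rfl (fun l => (hx l).2.le) l)
      (by simpa using le_maxCoord (update x j 1) j)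
  have hQ_one : 0 < prodExceptMax (update x j 1) :=
    prodExceptMax_pos (hcoord (0 < ·) one_pos fun l => (hx l).1)
  have hden (t : ℝ) (ht : t ∈ Icc (0 : ℝ) 1) :
      1 - maxCoord (update x j t) + prodExceptMax (update x j t) ≠ 0 := by
    rcases ht.2.lt_or_eq with ht1 | rfl
    · have hQ : 0 ≤ prodExceptMax (update x j t) :=
        div_nonneg (prod_nonneg fun l _ => hcoord (0 ≤ ·) ht.1 (fun l => (hx l).1.le) l)
          (hM_pos t).le
      linarith [maxCoord_lt_one (hcoord (· < 1) ht1 fun l => (hx l).2)]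
    · rw [hM_one]
      linarith
  have hupd : Continuous fun t : ℝ => update x j t := continuous_const.update j continuous_id
  have hM_cont := continuous_maxCoord.comp hupd
  have hQ_cont : Continuous fun t => prodExceptMax (update x j t) :=
    (continuous_finsetProd _ fun l _ => (continuous_apply l).comp hupd).div hM_cont
      fun t => (hM_pos t).ne'
  have hcont : ContinuousOn (fun t => pSymm (update x j t)) (Icc 0 1) :=
    hQ_cont.continuousOn.div ((continuous_const.sub hM_cont).add hQ_cont).continuousOn hden
  have h0 : pSymm (update x j 0) = 0 := by
    rw [pSymm, prodExceptMax, prod_eq_zero (mem_univ j) (update_self j 0 x), zero_div, zero_div]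
  have h1 : pSymm (update x j 1) = 1 := by
    rw [pSymm, hM_one, sub_self, zero_add, div_self hQ_one.ne']
  have hivt := intermediate_value_Ioo zero_le_one hcont
  rwa [h0, h1] at hivt

end CoordMax

open CoordMax

lemma pVal_eq_pSymm {k : ℕ} {x : Fin (k + 1) → ℝ} (hx : ∀ i, 0 < x i)
    {σ : Equiv.Perm (Fin (k + 1))} (hσ : Monotone (x ∘ σ)) : pVal σ x = pSymm x := by
  have hlast : maxCoord x = x (σ (Fin.last k)) :=
    le_antisymm (sup'_le _ _ fun i _ => by simpa using hσ (Fin.le_last (σ.symm i)))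
      (le_maxCoord x _)
  have hQ : prodExceptMax x = ∏ i ∈ univ.erase (Fin.last k), x (σ i) := by
    rw [prodExceptMax, hlast, div_eq_iff (hx _).ne', mul_comm]
    exact ((mul_prod_erase univ (fun i => x (σ i)) (mem_univ _)).trans
      (Equiv.prod_comp σ x)).symm
  rw [pVal, pSymm, hQ, hlast]

lemma pFun_eq_pSymm {k : ℕ} {x : Fin (k + 1) → ℝ} (hx : ∀ i, 0 < x i) : pFun x = pSymm x :=
  pVal_eq_pSymm hx (Tuple.monotone_sort x)

/-- (with `n = k + 2`, so `n ≥ 3` iff `k ≥ 1`) The function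
`p(x₁,…,x_{n-1}) = (∏_{i=1}^{n-2} x_{σ(i)}) / (1 - x_{σ(n-1)} + ∏_{i=1}^{n-2} x_{σ(i)})`,
where `σ` sorts the coordinates increasingly, is well defined (independent of the sorting
permutation chosen), maps `(0,1)^{n-1}` into `(0,1)`, is strictly increasing and surjective
onto `(0,1)` in each coordinate when the others are fixed in `(0,1)`, and in particular is
strictly monotone for the strict coordinatewise order. -/
theorem statement8 (k : ℕ) (hk : 1 ≤ k) :
    (∀ x : Fin (k + 1) → ℝ, (∀ i, x i ∈ Set.Ioo (0 : ℝ) 1) →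
      ∀ σ τ : Equiv.Perm (Fin (k + 1)),
        Monotone (x ∘ σ) → Monotone (x ∘ τ) → pVal σ x = pVal τ x) ∧
    (∀ x : Fin (k + 1) → ℝ, (∀ i, x i ∈ Set.Ioo (0 : ℝ) 1) →
      pFun x ∈ Set.Ioo (0 : ℝ) 1) ∧
    (∀ x : Fin (k + 1) → ℝ, (∀ i, x i ∈ Set.Ioo (0 : ℝ) 1) → ∀ j : Fin (k + 1),
      StrictMonoOn (fun t => pFun (Function.update x j t)) (Set.Ioo (0 : ℝ) 1) ∧
      Set.SurjOn (fun t => pFun (Function.update x j t))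
        (Set.Ioo (0 : ℝ) 1) (Set.Ioo (0 : ℝ) 1)) ∧
    (∀ x y : Fin (k + 1) → ℝ, (∀ i, x i ∈ Set.Ioo (0 : ℝ) 1) →
      (∀ i, y i ∈ Set.Ioo (0 : ℝ) 1) →
      (∀ i, x i ≤ y i) → x ≠ y → pFun x < pFun y) := by
  have : Nontrivial (Fin (k + 1)) := Fin.nontrivial_iff_two_le.2 (by omega)
  set box := univ.pi fun _ : Fin (k + 1) => Ioo (0 : ℝ) 1
  have hpFun : EqOn pFun pSymm box := fun x hx => pFun_eq_pSymm fun i => (hx i (mem_univ i)).1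
  have hmono : StrictMonoOn pFun box := pSymm_strictMonoOn.congr hpFun.symm
  have hupdate {x} (hx : x ∈ box) (j : Fin (k + 1)) : MapsTo (update x j) (Ioo 0 1) box :=
    fun _ ht => (update_mem_pi_iff_of_mem hx).2 fun _ => ht
  refine ⟨fun x hx σ τ hσ hτ => ?_, fun x hx => ?_, fun x hx j => ⟨?_, ?_⟩,
    fun x y hx hy hxy hne => hmono (mem_univ_pi.2 hx) (mem_univ_pi.2 hy) (lt_of_le_of_ne hxy hne)⟩
  · rw [pVal_eq_pSymm (fun i => (hx i).1) hσ, pVal_eq_pSymm (fun i => (hx i).1) hτ]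
  · rw [hpFun (mem_univ_pi.2 hx)]
    exact pSymm_mem_Ioo (mem_univ_pi.2 hx)
  · exact hmono.comp (update_strictMono.strictMonoOn _) (hupdate (mem_univ_pi.2 hx) j)
  · exact (surjOn_pSymm_update (mem_univ_pi.2 hx) j).congr fun t ht =>
      (hpFun (hupdate (mem_univ_pi.2 hx) j ht)).symm
end

section
/- Let g : (0,1) → (0,1) be strictly decreasing and surjective, let S ⊆ (0,1) be a set of Lebesgue measure 1, and let T ⊆ (0,1) be a finite set. Suppose g is differentiable with derivative zero at every point of S ∖ T. Then g((0,1) ∖ S) has Lebesgue measure 1. -/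
/-!
By the one-dimensional Sard lemma `g` maps `S` minus a finite set onto a null set, so `g '' S` is
null. Since `g` maps `(0,1)` onto `(0,1)`, the image of `(0,1) \ S` covers `(0,1)` up to that null set.
-/

open MeasureTheory Set

/-- One-dimensional Sard lemma: the determinant of the zero derivative vanishes. -/
theorem Real.addHaar_image_eq_zero_of_hasDerivWithinAt_zero {μ : Measure ℝ} [μ.IsAddHaarMeasure]
    {f : ℝ → ℝ} {s : Set ℝ} (hf : ∀ x ∈ s, HasDerivWithinAt f 0 s x) : μ (f '' s) = 0 :=
  addHaar_image_eq_zero_of_det_fderivWithin_eq_zero μ (f' := fun _ => 0)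
    (fun x hx => by simpa using (hf x hx).hasFDerivWithinAt) (fun _ _ => by simp)

theorem Real.addHaar_image_eq_zero_of_hasDerivAt_zero_off_countable {μ : Measure ℝ}
    [μ.IsAddHaarMeasure] {f : ℝ → ℝ} {s T : Set ℝ} (hT : T.Countable)
    (hf : ∀ x ∈ s \ T, HasDerivAt f 0 x) : μ (f '' s) = 0 := by
  have hsT : μ (f '' (s \ T)) = 0 :=
    Real.addHaar_image_eq_zero_of_hasDerivWithinAt_zero fun x hx => (hf x hx).hasDerivWithinAt
  refine measure_mono_null ?_ (measure_union_null hsT ((hT.image f).measure_zero μ))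
  rw [← image_union]
  exact image_mono (subset_sdiff_union s T)

theorem MeasureTheory.measure_le_image_diff_of_surjOn {α β : Type*} [MeasurableSpace β]
    {μ : Measure β} {f : α → β} {s A : Set α} {t : Set β} (hf : SurjOn f s t)
    (hA : μ (f '' A) = 0) : μ t ≤ μ (f '' (s \ A)) :=
  calc μ t ≤ μ (f '' (s \ A) ∪ f '' A) := by
        rw [← image_union, sdiff_union_self]
        exact measure_mono (hf.trans (image_mono subset_union_left))
    _ ≤ μ (f '' (s \ A)) + μ (f '' A) := measure_union_le _ _
    _ = μ (f '' (s \ A)) := by rw [hA, add_zero]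

theorem statement11_general (g : ℝ → ℝ)
    (hmaps : Set.MapsTo g (Set.Ioo 0 1) (Set.Ioo 0 1))
    (hsurj : Set.SurjOn g (Set.Ioo 0 1) (Set.Ioo 0 1))
    (S : Set ℝ)
    (T : Set ℝ) (hTfin : T.Finite)
    (hderiv : ∀ x ∈ S \ T, HasDerivAt g 0 x) :
    volume (g '' (Set.Ioo 0 1 \ S)) = 1 := by
  have hnull : volume (g '' S) = 0 :=
    Real.addHaar_image_eq_zero_of_hasDerivAt_zero_off_countable hTfin.countable hderiv
  have hvol : volume (Ioo (0 : ℝ) 1) = 1 := by simp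
  refine le_antisymm ?_ ?_
  · exact hvol ▸ measure_mono ((hmaps.mono_left sdiff_subset).image_subset)
  · exact hvol ▸ measure_le_image_diff_of_surjOn hsurj hnull

/-- If `g : (0,1) → (0,1)` is strictly decreasing and surjective, `S ⊆ (0,1)`
has Lebesgue measure `1`, `T ⊆ (0,1)` is finite, and `g` is differentiable with derivative
zero at every point of `S \ T`, then `g((0,1) \ S)` has Lebesgue measure `1`. -/
theorem statement11 (g : ℝ → ℝ)
    (hanti : StrictAntiOn g (Set.Ioo 0 1))
    (hmaps : Set.MapsTo g (Set.Ioo 0 1) (Set.Ioo 0 1))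
    (hsurj : Set.SurjOn g (Set.Ioo 0 1) (Set.Ioo 0 1))
    (S : Set ℝ) (hS : S ⊆ Set.Ioo 0 1) (hSvol : volume S = 1)
    (T : Set ℝ) (hT : T ⊆ Set.Ioo 0 1) (hTfin : T.Finite)
    (hderiv : ∀ x ∈ S \ T, HasDerivAt g 0 x) :
    volume (g '' (Set.Ioo 0 1 \ S)) = 1 :=
  statement11_general g hmaps hsurj S T hTfin hderiv
end

section
/- Let n ≥ 3, let f : [0,1] → [0,1] be a strictly increasing singular function from [0,1] onto [0,1], let p : (0,1)^{n−1} → (0,1) be defined by p(x) = (∏_{i=1}^{n−2} x_{σ(i)}) / (1 − x_{σ(n−1)} + ∏_{i=1}^{n−2} x_{σ(i)}) with σ a permutation sorting the coordinates of x in increasing order, and define F : (0,1)^{n−1} → (0,1) by F(x_1,…,x_{n−1}) = 1 − p(f(x_1),…,f(x_{n−1})). Then for all x, y ∈ (0,1)^{n−1} with x ≤ y coordinatewise and x ≠ y one has F(x) > F(y); consequently the graph of F is an antichain in [0,1]^n with respect to the coordinatewise partial order. -/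
open MeasureTheory

/-- The function `F(x) = 1 - p(f x₁, …, f x_{n-1})`. -/
noncomputable def Fconstr {k : ℕ} (f : ℝ → ℝ) (x : Fin (k + 1) → ℝ) : ℝ :=
  1 - pFun (fun i => f (x i))

/-- The maximum coordinate, expressed via the sorting permutation. -/
noncomputable def Mx {k : ℕ} (x : Fin (k + 1) → ℝ) : ℝ := x (Tuple.sort x (Fin.last k))

lemma le_Mx {k : ℕ} (x : Fin (k + 1) → ℝ) (i : Fin (k + 1)) : x i ≤ Mx x := by
  have h := Tuple.monotone_sort x (Fin.le_last ((Tuple.sort x).symm i))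
  simpa [Function.comp, Mx] using h

lemma prod_erase_eq {k : ℕ} (σ : Equiv.Perm (Fin (k + 1))) (x : Fin (k + 1) → ℝ) :
    x (σ (Fin.last k)) * ∏ i ∈ Finset.univ.erase (Fin.last k), x (σ i) = ∏ i, x i := by
  rw [Finset.mul_prod_erase Finset.univ (fun i => x (σ i)) (Finset.mem_univ (Fin.last k))]
  exact Equiv.prod_comp σ x

lemma pFun_eq {k : ℕ} (x : Fin (k + 1) → ℝ) (hx : Mx x ≠ 0) :
    pFun x = ((∏ i, x i) / Mx x) / (1 - Mx x + (∏ i, x i) / Mx x) := by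
  have h := prod_erase_eq (Tuple.sort x) x
  have hP : (∏ i ∈ Finset.univ.erase (Fin.last k), x (Tuple.sort x i))
      = (∏ i, x i) / Mx x := by
    rw [eq_div_iff hx, mul_comm]
    exact h
  simp only [pFun, pVal, hP, Mx]

lemma pcomp {P₁ P₂ M₁ M₂ : ℝ} (hP₁ : 0 < P₁) (hM₂ : M₂ < 1) (hP : P₁ ≤ P₂) (hM : M₁ ≤ M₂)
    (hstrict : P₁ < P₂ ∨ M₁ < M₂) :
    P₁ / (1 - M₁ + P₁) < P₂ / (1 - M₂ + P₂) := by
  have hP₂ : 0 < P₂ := lt_of_lt_of_le hP₁ hP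
  have h2 : 0 < 1 - M₁ + P₁ := by linarith
  have h3 : 0 < 1 - M₂ + P₂ := by linarith
  rw [div_lt_div_iff₀ h2 h3]
  rcases hstrict with h | h <;> nlinarith

lemma pFun_mem {k : ℕ} (x : Fin (k + 1) → ℝ) (hx : ∀ i, x i ∈ Set.Ioo (0 : ℝ) 1) :
    pFun x ∈ Set.Ioo (0 : ℝ) 1 := by
  have hMx : Mx x ∈ Set.Ioo (0 : ℝ) 1 := hx _
  have hA : 0 < ∏ i, x i := Finset.prod_pos (fun i _ => (hx i).1)
  have hP : 0 < (∏ i, x i) / Mx x := div_pos hA hMx.1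
  rw [pFun_eq x (ne_of_gt hMx.1)]
  constructor
  · apply div_pos hP; linarith [hMx.2]
  · rw [div_lt_one (by linarith [hMx.2])]; linarith [hMx.2]

lemma pFun_lt {k : ℕ} (x y : Fin (k + 1) → ℝ)
    (hx : ∀ i, x i ∈ Set.Ioo (0 : ℝ) 1) (hy : ∀ i, y i ∈ Set.Ioo (0 : ℝ) 1)
    (hle : ∀ i, x i ≤ y i) (j : Fin (k + 1)) (hj : x j < y j) :
    pFun x < pFun y := by
  classical
  have hMx : Mx x ∈ Set.Ioo (0 : ℝ) 1 := hx _
  have hMy : Mx y ∈ Set.Ioo (0 : ℝ) 1 := hy _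
  have hAx : 0 < ∏ i, x i := Finset.prod_pos (fun i _ => (hx i).1)
  have hAy : 0 < ∏ i, y i := Finset.prod_pos (fun i _ => (hy i).1)
  have hMle : Mx x ≤ Mx y := le_trans (hle _) (le_Mx y _)
  have hAlt : (∏ i, x i) < ∏ i, y i :=
    Finset.prod_lt_prod (fun i _ => (hx i).1) (fun i _ => hle i)
      ⟨j, Finset.mem_univ j, hj⟩
  -- i₁ : index where y achieves its max
  set i₁ := Tuple.sort y (Fin.last k) with hi₁
  have hyi₁ : y i₁ = Mx y := rfl
  set E : ℝ := ∏ i ∈ Finset.univ.erase i₁, x i with hE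
  have hEpos : 0 < E := Finset.prod_pos (fun i _ => (hx i).1)
  have hxE : x i₁ * E = ∏ i, x i := Finset.mul_prod_erase Finset.univ x (Finset.mem_univ i₁)
  have hupd : (∏ i, Function.update x i₁ (y i₁) i) = y i₁ * E := by
    rw [Finset.prod_update_of_mem (Finset.mem_univ i₁), Finset.sdiff_singleton_eq_erase]
  have hAyE : Mx y * E ≤ ∏ i, y i := by
    rw [← hyi₁, ← hupd]
    apply Finset.prod_le_prod
    · intro i _
      by_cases h : i = i₁
      · rw [h, Function.update_self]; exact (hy i₁).1.le
      · rw [Function.update_of_ne h]; exact (hx i).1.le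
    · intro i _
      by_cases h : i = i₁
      · rw [h, Function.update_self]
      · rw [Function.update_of_ne h]; exact hle i
  have hPx_le_E : (∏ i, x i) / Mx x ≤ E := by
    rw [div_le_iff₀ hMx.1, ← hxE]
    have : x i₁ ≤ Mx x := le_Mx x i₁
    nlinarith
  have hE_le_Py : E ≤ (∏ i, y i) / Mx y := by
    rw [le_div_iff₀ hMy.1]
    nlinarith
  have hPle : (∏ i, x i) / Mx x ≤ (∏ i, y i) / Mx y := le_trans hPx_le_E hE_le_Py
  have hstrict : (∏ i, x i) / Mx x < (∏ i, y i) / Mx y ∨ Mx x < Mx y := by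
    rcases lt_or_eq_of_le hMle with h | h
    · exact Or.inr h
    · left; rw [← h]
      have h0 := hMx.1
      gcongr
  rw [pFun_eq x (ne_of_gt hMx.1), pFun_eq y (ne_of_gt hMy.1)]
  exact pcomp (div_pos hAx hMx.1) hMy.2 hPle hMle hstrict

/-- (with `n = k + 2`, so `n ≥ 3` iff `k ≥ 1`) Let `f` be a strictly increasing
singular function from `[0,1]` onto `[0,1]` and let `F(x) = 1 - p(f x₁, …, f x_{n-1})`. Then
`F` is strictly decreasing for the strict coordinatewise order on `(0,1)^{n-1}`, and
consequently the graph of `F` is an antichain in `[0,1]^n` for the coordinatewise order. -/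
theorem statement13 (k : ℕ) (hk : 1 ≤ k) (f : ℝ → ℝ) (S : Set ℝ)
    (hmono : StrictMonoOn f (Set.Icc 0 1))
    (hcont : ContinuousOn f (Set.Icc 0 1))
    (hmaps : Set.MapsTo f (Set.Icc 0 1) (Set.Icc 0 1))
    (hsurj : Set.SurjOn f (Set.Icc 0 1) (Set.Icc 0 1))
    (hS : S ⊆ Set.Ioo 0 1) (hSvol : volume S = 1)
    (hderiv : ∀ x ∈ S, HasDerivAt f 0 x) :
    (∀ x y : Fin (k + 1) → ℝ, (∀ i, x i ∈ Set.Ioo (0 : ℝ) 1) →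
      (∀ i, y i ∈ Set.Ioo (0 : ℝ) 1) → (∀ i, x i ≤ y i) → x ≠ y →
      Fconstr f y < Fconstr f x) ∧
    ({z : Fin (k + 2) → ℝ | ∃ x : Fin (k + 1) → ℝ,
        (∀ i, x i ∈ Set.Ioo (0 : ℝ) 1) ∧ z = Fin.snoc x (Fconstr f x)} ⊆
      {z : Fin (k + 2) → ℝ | ∀ i, z i ∈ Set.Icc (0 : ℝ) 1}) ∧
    (∀ z ∈ {z : Fin (k + 2) → ℝ | ∃ x : Fin (k + 1) → ℝ,
        (∀ i, x i ∈ Set.Ioo (0 : ℝ) 1) ∧ z = Fin.snoc x (Fconstr f x)},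
      ∀ w ∈ {z : Fin (k + 2) → ℝ | ∃ x : Fin (k + 1) → ℝ,
        (∀ i, x i ∈ Set.Ioo (0 : ℝ) 1) ∧ z = Fin.snoc x (Fconstr f x)},
      (∀ i, z i ≤ w i) → z = w) := by
  -- f maps (0,1) into (0,1)
  have hf01 : ∀ t ∈ Set.Ioo (0 : ℝ) 1, f t ∈ Set.Ioo (0 : ℝ) 1 := by
    intro t ht
    have h0 : (0 : ℝ) ∈ Set.Icc (0 : ℝ) 1 := by norm_num
    have h1 : (1 : ℝ) ∈ Set.Icc (0 : ℝ) 1 := by norm_num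
    have ht' : t ∈ Set.Icc (0 : ℝ) 1 := ⟨ht.1.le, ht.2.le⟩
    have hf0 : f 0 < f t := hmono h0 ht' ht.1
    have hf1 : f t < f 1 := hmono ht' h1 ht.2
    exact ⟨lt_of_le_of_lt (hmaps h0).1 hf0, lt_of_lt_of_le hf1 (hmaps h1).2⟩
  have hfle : ∀ a b, a ∈ Set.Ioo (0:ℝ) 1 → b ∈ Set.Ioo (0:ℝ) 1 → a ≤ b → f a ≤ f b := by
    intro a b ha hb hab
    rcases eq_or_lt_of_le hab with h | h
    · rw [h]
    · exact (hmono ⟨ha.1.le, ha.2.le⟩ ⟨hb.1.le, hb.2.le⟩ h).le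
  have main : ∀ x y : Fin (k + 1) → ℝ, (∀ i, x i ∈ Set.Ioo (0 : ℝ) 1) →
      (∀ i, y i ∈ Set.Ioo (0 : ℝ) 1) → (∀ i, x i ≤ y i) → x ≠ y →
      Fconstr f y < Fconstr f x := by
    intro x y hx hy hle hne
    obtain ⟨j, hj⟩ : ∃ j, x j ≠ y j := by
      by_contra h
      push_neg at h
      exact hne (funext h)
    have hjlt : x j < y j := lt_of_le_of_ne (hle j) hj
    have hp : pFun (fun i => f (x i)) < pFun (fun i => f (y i)) :=
      pFun_lt _ _ (fun i => hf01 _ (hx i)) (fun i => hf01 _ (hy i))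
        (fun i => hfle _ _ (hx i) (hy i) (hle i)) j
        (hmono ⟨(hx j).1.le, (hx j).2.le⟩ ⟨(hy j).1.le, (hy j).2.le⟩ hjlt)
    simp only [Fconstr]
    linarith
  have hFmem : ∀ x : Fin (k + 1) → ℝ, (∀ i, x i ∈ Set.Ioo (0 : ℝ) 1) →
      Fconstr f x ∈ Set.Ioo (0 : ℝ) 1 := by
    intro x hx
    have := pFun_mem (fun i => f (x i)) (fun i => hf01 _ (hx i))
    exact ⟨by simp only [Fconstr]; linarith [this.2], by simp only [Fconstr]; linarith [this.1]⟩
  refine ⟨main, ?_, ?_⟩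
  · rintro z ⟨x, hx, rfl⟩ i
    refine Fin.lastCases ?_ ?_ i
    · simp only [Fin.snoc_last]
      exact ⟨(hFmem x hx).1.le, (hFmem x hx).2.le⟩
    · intro j
      simp only [Fin.snoc_castSucc]
      exact ⟨(hx j).1.le, (hx j).2.le⟩
  · rintro z ⟨x, hx, rfl⟩ w ⟨x', hx', rfl⟩ hzw
    have hcoord : ∀ i, x i ≤ x' i := by
      intro i
      have := hzw (Fin.castSucc i)
      simpa [Fin.snoc_castSucc] using this
    have hlast : Fconstr f x ≤ Fconstr f x' := by
      have := hzw (Fin.last (k + 1))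
      simpa [Fin.snoc_last] using this
    by_cases h : x = x'
    · rw [h]
    · exact absurd hlast (not_le.mpr (main x x' hx hx' hcoord h))
end

section
/- Let n ≥ 3, let f : [0,1] → [0,1] be a strictly increasing singular function with associated full-measure set S ⊆ (0,1) on which f has derivative zero, let p and F be as in the construction (F(x) = 1 − p(f(x_1),…,f(x_{n−1}))). Fix x_1,…,x_{n−2} ∈ S pairwise distinct and set T = {x_1,…,x_{n−2}}. Then the function g(t) = F(x_1,…,x_{n−2},t) on (0,1) is strictly decreasing and surjective onto (0,1), and g is differentiable with derivative zero at every point t ∈ S ∖ T. -/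
/-!
Write `A = ∏ f xᵢ`, `M = max f xᵢ ∈ (0,1)` and `u = f t`. The largest coordinate of
`(f x₁, …, f x_{n-2}, u)` is `m = max M u`, so `p = (A u / m) / (1 - m + A u / m)` and
`g t = r / (1 + r)` with `r = (1 - m) m / (A u)`. As a function of `u`, `r` equals
`M (1 - M) / (A u)` on `(0, M]` and `(1 - u) / A` on `[M, 1)`: it decreases strictly from `∞`
to `0`, so `g` is a strictly decreasing bijection of `(0,1)` because `f` is an increasing one.
Off `u = M`, in particular for `t ∉ T`, `r` is smooth in `u`, and the chain rule with `f' t = 0`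
gives `g' t = 0`.
-/

open MeasureTheory

/-- The one-variable slice `g(t) = F(x₁, …, x_{n-2}, t)` of `F`, with `x₁, …, x_{n-2}` fixed. -/
noncomputable def gSlice {k : ℕ} (f : ℝ → ℝ) (xfix : Fin k → ℝ) (t : ℝ) : ℝ :=
  Fconstr f (Fin.snoc xfix t)

open Set

theorem pFun_eq_of_isGreatest {k : ℕ} {b : Fin (k + 1) → ℝ} {m : ℝ}
    (hb : IsGreatest (range b) m) (hm : m ≠ 0) :
    pFun b = (∏ i, b i) / m / (1 - m + (∏ i, b i) / m) := by
  set σ := Tuple.sort b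
  have hlast : b (σ (Fin.last k)) = m := by
    refine le_antisymm (hb.2 (mem_range_self _)) ?_
    obtain ⟨i, rfl⟩ := hb.1
    calc b i = b (σ (σ.symm i)) := by rw [σ.apply_symm_apply]
      _ ≤ b (σ (Fin.last k)) := Tuple.monotone_sort b (Fin.le_last _)
  have hprod : ∏ i ∈ Finset.univ.erase (Fin.last k), b (σ i) = (∏ i, b i) / m := by
    rw [eq_div_iff hm, ← hlast, Finset.prod_erase_mul _ _ (Finset.mem_univ _),
      Equiv.prod_comp σ b]
  rw [pFun, pVal, hprod, hlast]

theorem differentiableAt_max_const {M u : ℝ} (h : u ≠ M) :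
    DifferentiableAt ℝ (fun v => max M v) u := by
  rcases h.lt_or_gt with h | h
  · exact (differentiableAt_const M).congr_of_eventuallyEq
      ((eventually_lt_nhds h).mono fun v hv => max_eq_left hv.le)
  · exact differentiableAt_id.congr_of_eventuallyEq
      ((eventually_gt_nhds h).mono fun v hv => max_eq_right hv.le)

theorem StrictMonoOn.image_Ioo_eq_of_surjOn {f : ℝ → ℝ} {a b : ℝ} (hab : a ≤ b)
    (hmono : StrictMonoOn f (Icc a b)) (hcont : ContinuousOn f (Icc a b))
    (hmaps : MapsTo f (Icc a b) (Icc a b)) (hsurj : SurjOn f (Icc a b) (Icc a b)) :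
    f '' Ioo a b = Ioo a b := by
  have hlo : a ∈ Icc a b := left_mem_Icc.2 hab
  have hhi : b ∈ Icc a b := right_mem_Icc.2 hab
  have hfa : f a = a := by
    obtain ⟨x, hx, hfx⟩ := hsurj hlo
    exact le_antisymm ((hmono.monotoneOn hlo hx hx.1).trans hfx.le) (hmaps hlo).1
  have hfb : f b = b := by
    obtain ⟨x, hx, hfx⟩ := hsurj hhi
    exact le_antisymm (hmaps hhi).2 (hfx.ge.trans (hmono.monotoneOn hx hhi hx.2))
  rw [hcont.image_Ioo_of_strictMonoOn hab hmono, hfa, hfb]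

noncomputable def sliceRatio (A M u : ℝ) : ℝ := (1 - max M u) * max M u / (A * u)

noncomputable def sliceProfile (A M u : ℝ) : ℝ := sliceRatio A M u / (1 + sliceRatio A M u)

section Profile

variable {A M u : ℝ}

theorem sliceRatio_of_le (h : u ≤ M) : sliceRatio A M u = (1 - M) * M / (A * u) := by
  rw [sliceRatio, max_eq_left h]

theorem sliceRatio_of_ge (hu : u ≠ 0) (h : M ≤ u) :
    sliceRatio A M u = (1 - u) / A := by
  rw [sliceRatio, max_eq_right h, mul_div_mul_right _ _ hu]

theorem sliceRatio_pos (hA : 0 < A) (hM : 0 < M) (hu : u ∈ Ioo 0 1) (hM1 : M < 1) :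
    0 < sliceRatio A M u := by
  have hm : 0 < max M u := lt_max_of_lt_left hM
  have hm1 : max M u < 1 := max_lt hM1 hu.2
  exact div_pos (mul_pos (by linarith) hm) (mul_pos hA hu.1)

theorem strictAntiOn_sliceRatio (hA : 0 < A) (hM : M ∈ Ioo 0 1) :
    StrictAntiOn (sliceRatio A M) (Ioi 0) := by
  have hleft : StrictAntiOn (sliceRatio A M) (Ioc 0 M) := by
    intro u hu v hv huv
    rw [sliceRatio_of_le hu.2, sliceRatio_of_le hv.2]
    have : 0 < (1 - M) * M := mul_pos (by linarith [hM.2]) hM.1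
    gcongr
    exact mul_pos hA hu.1
  have hright : StrictAntiOn (sliceRatio A M) (Ici M) := by
    intro u hu v hv huv
    have hu0 : u ≠ 0 := (hM.1.trans_le hu).ne'
    have hv0 : v ≠ 0 := (hM.1.trans_le hv).ne'
    rw [sliceRatio_of_ge hu0 hu, sliceRatio_of_ge hv0 hv]
    gcongr
  have h := hleft.union hright (isGreatest_Ioc hM.1) isLeast_Ici
  rwa [Ioc_union_Ici_eq_Ioi hM.1] at h

theorem surjOn_sliceRatio (hA : 0 < A) (hM : M ∈ Ioo 0 1) :
    SurjOn (sliceRatio A M) (Ioo 0 1) (Ioi 0) := by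
  intro s (hs : 0 < s)
  have hM1 : 0 < 1 - M := by linarith [hM.2]
  rcases le_or_gt (A * s) (1 - M) with h | h
  · refine ⟨1 - A * s, ⟨by linarith [hM.1], by nlinarith⟩, ?_⟩
    rw [sliceRatio_of_ge (by linarith [hM.1]) (by linarith)]
    field_simp
    ring
  · have hAs : 0 < A * s := by positivity
    have hlt : (1 - M) * M / (A * s) < M := by
      rw [div_lt_iff₀ hAs]
      nlinarith [hM.1]
    have hpos : 0 < (1 - M) * M / (A * s) := div_pos (mul_pos hM1 hM.1) hAs
    refine ⟨(1 - M) * M / (A * s), ⟨hpos, hlt.trans hM.2⟩, ?_⟩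
    rw [sliceRatio_of_le hlt.le]
    field_simp [hM.1.ne']

theorem differentiableAt_sliceRatio (hA : A ≠ 0) (hu : u ≠ 0) (hne : u ≠ M) :
    DifferentiableAt ℝ (sliceRatio A M) u := by
  have hmax := differentiableAt_max_const hne
  exact (((differentiableAt_const 1).sub hmax).mul hmax).div
    (differentiableAt_id.const_mul A) (mul_ne_zero hA hu)

theorem strictAntiOn_sliceProfile (hA : 0 < A) (hM : M ∈ Ioo 0 1) :
    StrictAntiOn (sliceProfile A M) (Ioo 0 1) := by
  have hφ : StrictMonoOn (fun r : ℝ => r / (1 + r)) (Ioi 0) := by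
    intro r (hr : 0 < r) s (hs : 0 < s) hrs
    rw [div_lt_div_iff₀ (by linarith) (by linarith)]
    linarith
  exact hφ.comp_strictAntiOn ((strictAntiOn_sliceRatio hA hM).mono Ioo_subset_Ioi_self)
    fun u hu => sliceRatio_pos hA hM.1 hu hM.2

theorem mapsTo_sliceProfile (hA : 0 < A) (hM : M ∈ Ioo 0 1) :
    MapsTo (sliceProfile A M) (Ioo 0 1) (Ioo 0 1) := by
  intro u hu
  have hr := sliceRatio_pos hA hM.1 hu hM.2
  exact ⟨by unfold sliceProfile; positivity, (div_lt_one (by linarith)).2 (by linarith)⟩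

theorem surjOn_sliceProfile (hA : 0 < A) (hM : M ∈ Ioo 0 1) :
    SurjOn (sliceProfile A M) (Ioo 0 1) (Ioo 0 1) := by
  intro y hy
  have hy1 : 0 < 1 - y := by linarith [hy.2]
  obtain ⟨u, hu, hru⟩ := surjOn_sliceRatio hA hM (div_pos hy.1 hy1 : y / (1 - y) ∈ Ioi 0)
  refine ⟨u, hu, ?_⟩
  rw [sliceProfile, hru]
  field_simp
  ring

theorem differentiableAt_sliceProfile (hA : 0 < A) (hM : M ∈ Ioo 0 1) (hu : u ∈ Ioo 0 1)
    (hne : u ≠ M) : DifferentiableAt ℝ (sliceProfile A M) u := by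
  have hr := differentiableAt_sliceRatio hA.ne' hu.1.ne' hne
  have hpos := sliceRatio_pos hA hM.1 hu hM.2
  exact hr.div ((differentiableAt_const 1).add hr) (by linarith)

end Profile

theorem one_sub_pFun_snoc {k : ℕ} {a : Fin k → ℝ} {M u : ℝ} (ha : ∀ i, 0 < a i)
    (hM : IsGreatest (range a) M) (hM1 : M < 1) (hu : u ∈ Ioo 0 1) :
    1 - pFun (Fin.snoc a u : Fin (k + 1) → ℝ) = sliceProfile (∏ i, a i) M u := by
  have hM0 : 0 < M := by
    obtain ⟨i, rfl⟩ := hM.1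
    exact ha i
  have hA : 0 < ∏ i, a i := Finset.prod_pos fun i _ => ha i
  have hm : IsGreatest (range (Fin.snoc a u : Fin (k + 1) → ℝ)) (max M u) := by
    rw [Fin.range_snoc, max_comm]
    exact hM.insert u
  rw [pFun_eq_of_isGreatest hm (lt_max_of_lt_left hM0).ne', Fin.prod_snoc, sliceProfile,
    sliceRatio]
  set m := max M u
  set P := (∏ i, a i) * u
  have hm0 : 0 < m := lt_max_of_lt_left hM0
  have hm1 : m < 1 := max_lt hM1 hu.2
  have hP : 0 < P := mul_pos hA hu.1
  have hD : 0 < (1 - m) * m + P := by nlinarith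
  rw [show 1 - m + P / m = ((1 - m) * m + P) / m by field_simp,
    show 1 + (1 - m) * m / P = ((1 - m) * m + P) / P by field_simp; ring,
    div_div_div_cancel_right₀ hm0.ne', div_div_div_cancel_right₀ hP.ne', one_sub_div hD.ne',
    add_sub_cancel_right]

theorem gSlice_eq_sliceProfile {k : ℕ} {f : ℝ → ℝ} {xfix : Fin k → ℝ} {M t : ℝ}
    (hpos : ∀ i, 0 < f (xfix i)) (hM : IsGreatest (range (f ∘ xfix)) M) (hM1 : M < 1)
    (ht : f t ∈ Ioo 0 1) : gSlice f xfix t = sliceProfile (∏ i, f (xfix i)) M (f t) := by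
  have h := one_sub_pFun_snoc (a := f ∘ xfix) hpos hM hM1 ht
  rw [← Fin.comp_snoc] at h
  exact h

theorem statement14_general (k : ℕ) (hk : 1 ≤ k) (f : ℝ → ℝ) (S : Set ℝ)
    (hmono : StrictMonoOn f (Set.Icc 0 1))
    (hcont : ContinuousOn f (Set.Icc 0 1))
    (hmaps : Set.MapsTo f (Set.Icc 0 1) (Set.Icc 0 1))
    (hsurj : Set.SurjOn f (Set.Icc 0 1) (Set.Icc 0 1))
    (hS : S ⊆ Set.Ioo 0 1)
    (hderiv : ∀ x ∈ S, HasDerivAt f 0 x)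
    (xfix : Fin k → ℝ) (hxS : ∀ i, xfix i ∈ S) :
    StrictAntiOn (gSlice f xfix) (Set.Ioo 0 1) ∧
    Set.MapsTo (gSlice f xfix) (Set.Ioo 0 1) (Set.Ioo 0 1) ∧
    Set.SurjOn (gSlice f xfix) (Set.Ioo 0 1) (Set.Ioo 0 1) ∧
    ∀ t ∈ S \ Set.range xfix, HasDerivAt (gSlice f xfix) 0 t := by
  have hf : f '' Ioo 0 1 = Ioo 0 1 := hmono.image_Ioo_eq_of_surjOn zero_le_one hcont hmaps hsurj
  have hfmaps : MapsTo f (Ioo 0 1) (Ioo 0 1) := mapsTo_iff_image_subset.2 hf.subset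
  have hfsurj : SurjOn f (Ioo 0 1) (Ioo 0 1) := hf.superset
  have hxf : ∀ i, f (xfix i) ∈ Ioo 0 1 := fun i => hfmaps (hS (hxS i))
  have : Nonempty (Fin k) := ⟨⟨0, hk⟩⟩
  obtain ⟨j, hj⟩ := Finite.exists_max (f ∘ xfix)
  set A := ∏ i, f (xfix i)
  set M := f (xfix j)
  have hA : 0 < A := Finset.prod_pos fun i _ => (hxf i).1
  have hM : M ∈ Ioo 0 1 := hxf j
  have hg : EqOn (gSlice f xfix) (sliceProfile A M ∘ f) (Ioo 0 1) := fun t ht =>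
    gSlice_eq_sliceProfile (fun i => (hxf i).1) ⟨⟨j, rfl⟩, forall_mem_range.2 hj⟩ hM.2
      (hfmaps ht)
  refine ⟨?_, ?_, ?_, ?_⟩
  · exact ((strictAntiOn_sliceProfile hA hM).comp_strictMonoOn
      (hmono.mono Ioo_subset_Icc_self) hfmaps).congr hg.symm
  · exact ((mapsTo_sliceProfile hA hM).comp hfmaps).congr hg.symm
  · exact ((surjOn_sliceProfile hA hM).comp hfsurj).congr hg.symm
  · rintro t ⟨htS, htx⟩
    have ht := hS htS
    have hne : f t ≠ M := fun h => htx ⟨j, hmono.injOn (Ioo_subset_Icc_self (hS (hxS j)))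
      (Ioo_subset_Icc_self ht) h.symm⟩
    have hd := (differentiableAt_sliceProfile hA hM (hfmaps ht) hne).hasDerivAt.comp t
      (hderiv t htS)
    rw [mul_zero] at hd
    exact hd.congr_of_eventuallyEq (hg.eventuallyEq_of_mem (Ioo_mem_nhds ht.1 ht.2))

/-- (with `n = k + 2`, so `n ≥ 3` iff `k ≥ 1`) Let `f` be a strictly increasing
singular function with associated full-measure set `S ⊆ (0,1)` on which `f` has derivative
zero, and let `F(x) = 1 - p(f x₁, …, f x_{n-1})`. Fix pairwise distinct `x₁, …, x_{n-2} ∈ S`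
and let `T = {x₁, …, x_{n-2}}`. Then `g(t) = F(x₁, …, x_{n-2}, t)` is strictly decreasing and
surjective from `(0,1)` onto `(0,1)`, and `g` is differentiable with derivative zero at every
point of `S \ T`. -/
theorem statement14 (k : ℕ) (hk : 1 ≤ k) (f : ℝ → ℝ) (S : Set ℝ)
    (hmono : StrictMonoOn f (Set.Icc 0 1))
    (hcont : ContinuousOn f (Set.Icc 0 1))
    (hmaps : Set.MapsTo f (Set.Icc 0 1) (Set.Icc 0 1))
    (hsurj : Set.SurjOn f (Set.Icc 0 1) (Set.Icc 0 1))
    (hS : S ⊆ Set.Ioo 0 1) (hSvol : volume S = 1)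
    (hderiv : ∀ x ∈ S, HasDerivAt f 0 x)
    (xfix : Fin k → ℝ) (hxS : ∀ i, xfix i ∈ S) (hxinj : Function.Injective xfix) :
    StrictAntiOn (gSlice f xfix) (Set.Ioo 0 1) ∧
    Set.MapsTo (gSlice f xfix) (Set.Ioo 0 1) (Set.Ioo 0 1) ∧
    Set.SurjOn (gSlice f xfix) (Set.Ioo 0 1) (Set.Ioo 0 1) ∧
    ∀ t ∈ S \ Set.range xfix, HasDerivAt (gSlice f xfix) 0 t :=
  statement14_general k hk f S hmono hcont hmaps hsurj hS hderiv xfix hxS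
end
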